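/- arXiv:1806.07010 — 2 statements merged into one kernel-verified Lean document; each statement's English description precedes it below -/
import Mathlib

section
/- Let G be a torsion-free abelian group, S a Schur ring over F[G], α ∈ S, and m ∈ ℤ. Then the freshman exponent α^{(m)} = Σ_g α_g g^m lies in S. -/
/-- The Hadamard (coefficientwise) product on the group algebra. -/
noncomputable def hadamard {F G : Type*} [Semiring F]
    (α β : MonoidAlgebra F G) : MonoidAlgebra F G :=
  MonoidAlgebra.ofCoeff (Finsupp.zipWith (· * ·) (mul_zero 0) α.coeff β.coeff)

/-- The simple quantity `C̄ = ∑_{g ∈ C} g` of a finite subset of `G`. -/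
noncomputable def simpleQuantity (F : Type*) {G : Type*} [Semiring F] (C : Finset G) :
    MonoidAlgebra F G :=
  ∑ g ∈ C, MonoidAlgebra.single g 1

/-- A partition of `G` into finite (nonempty) classes, i.e. a partition of finite support. -/
structure FinPartition (G : Type*) where
  classes : Set (Finset G)
  nonempty : ∀ C ∈ classes, C.Nonempty
  existsUnique_mem : ∀ g : G, ∃! C, C ∈ classes ∧ g ∈ C

/-- The Schur module associated to a partition of finite support: the `F`-span of the
simple quantities of the classes. -/
noncomputable def schurModule (F : Type*) {G : Type*} [Field F] (P : FinPartition G) :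
    Submodule F (MonoidAlgebra F G) :=
  Submodule.span F (simpleQuantity F '' P.classes)

/-- A Schur ring over a group `G` with coefficients in `F`, given by its partition
of finite support: `{1}` is a class, classes are closed under inversion, and the product
of two simple quantities is a finite `F`-linear combination of simple quantities. -/
structure SchurRing (F G : Type*) [Field F] [Group G] extends FinPartition G where
  one_mem : ({1} : Finset G) ∈ classes
  inv_mem : ∀ C ∈ classes, ∃ D ∈ classes, ∀ g : G, g ∈ D ↔ g⁻¹ ∈ C
  mul_mem : ∀ C ∈ classes, ∀ D ∈ classes,
    simpleQuantity F C * simpleQuantity F D ∈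
      Submodule.span F (simpleQuantity F '' classes)

/-- The underlying Schur ring, as a submodule of the group algebra. -/
noncomputable def SchurRing.carrier {F G : Type*} [Field F] [Group G] (S : SchurRing F G) :
    Submodule F (MonoidAlgebra F G) :=
  schurModule F S.toFinPartition

/-- A subset of `G` is an `S`-set if it is a union of classes of the partition. -/
def IsSSet {F G : Type*} [Field F] [Group G] (S : SchurRing F G) (X : Set G) : Prop :=
  ∃ E ⊆ S.classes, X = ⋃ C ∈ E, (C : Set G)

/-- The group ring `F[H]` of a subgroup, viewed inside `F[G]`. -/
noncomputable def groupRingOf (F : Type*) {G : Type*} [Field F] [Group G] (H : Subgroup G) :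
    Submodule F (MonoidAlgebra F G) :=
  Submodule.span F ((fun g => (MonoidAlgebra.single g 1 : MonoidAlgebra F G)) '' (H : Set G))

/-- The freshman exponent `α^{(m)} = ∑_g α_g g^m`. -/
noncomputable def fresh {F G : Type*} [Field F] [Group G] (m : ℤ)
    (α : MonoidAlgebra F G) : MonoidAlgebra F G :=
  ∑ g ∈ α.coeff.support, MonoidAlgebra.single (g ^ m) (α.coeff g)

/-!
For `m = 0` and `m = -1` the claim holds because `{1}` is a class and classes are closed under
inversion. Since `α ↦ α^{(m)}` is an algebra endomorphism with `(α^{(b)})^{(a)} = α^{(ba)}`, it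
remains to treat a prime exponent `p`, and by linearity only a class sum `C̄`.

An element lies in `S` exactly when its coefficients are constant on classes. The coefficients
of `C̄^p ∈ S` are natural numbers, constant on classes since `F` has characteristic zero. Reduced
mod `p` they are, by the Frobenius, the coefficients of `C̄^{(p)}`, which are `0` or `1` because
`g ↦ g^p` is injective. Hence `C̄^{(p)}` is constant on classes as well.
-/

theorem coeff_simpleQuantity {R G : Type*} [Semiring R] [DecidableEq G] (C : Finset G) (g : G) :
    (simpleQuantity R C).coeff g = if g ∈ C then 1 else 0 := by
  simp [simpleQuantity, MonoidAlgebra.coeff_sum, MonoidAlgebra.coeff_single, Finsupp.single_apply]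

theorem MonoidAlgebra.mapRingHom_simpleQuantity {R R' G : Type*} [Semiring R] [Semiring R']
    [Monoid G] (f : R →+* R') (C : Finset G) :
    MonoidAlgebra.mapRingHom G f (simpleQuantity R C) = simpleQuantity R' C := by
  simp [simpleQuantity]

instance MonoidAlgebra.charP {K G : Type*} [Field K] [Monoid G] (p : ℕ) [CharP K p] :
    CharP (MonoidAlgebra K G) p :=
  charP_of_injective_algebraMap' K p

theorem simpleQuantity_pow_char {K G : Type*} [Field K] [CommMonoid G] [DecidableEq G]
    (p : ℕ) [Fact p.Prime] [CharP K p] {C : Finset G} (hC : Set.InjOn (fun g : G => g ^ p) C) :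
    simpleQuantity K C ^ p = simpleQuantity K (C.image fun g => g ^ p) := by
  rw [simpleQuantity, simpleQuantity, sum_pow_char, Finset.sum_image hC]
  simp [MonoidAlgebra.single_pow]

theorem natCast_coeff_simpleQuantity_pow {R G : Type*} [Semiring R] [Monoid G] (C : Finset G)
    (n : ℕ) (g : G) : ((simpleQuantity ℕ C ^ n).coeff g : R) = (simpleQuantity R C ^ n).coeff g := by
  rw [← eq_natCast (Nat.castRingHom R), ← MonoidAlgebra.coeff_mapRingHom, map_pow,
    MonoidAlgebra.mapRingHom_simpleQuantity]

namespace FinPartition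

variable {G : Type*} (P : FinPartition G)

theorem mem_iff_eq_of_mem {C D : Finset G} (hC : C ∈ P.classes) (hD : D ∈ P.classes) {g : G}
    (hg : g ∈ C) : g ∈ D ↔ D = C :=
  ⟨fun h => (P.existsUnique_mem g).unique ⟨hD, h⟩ ⟨hC, hg⟩, fun h => h ▸ hg⟩

noncomputable def classOf (g : G) : Finset G := (P.existsUnique_mem g).exists.choose

theorem classOf_mem (g : G) : P.classOf g ∈ P.classes :=
  (P.existsUnique_mem g).exists.choose_spec.1

theorem mem_classOf (g : G) : g ∈ P.classOf g :=
  (P.existsUnique_mem g).exists.choose_spec.2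

variable {F : Type*} [Field F]

theorem mem_schurModule_iff {x : MonoidAlgebra F G} :
    x ∈ schurModule F P ↔ ∀ C ∈ P.classes, ∀ g ∈ C, ∀ h ∈ C, x.coeff g = x.coeff h := by
  classical
  constructor
  · intro hx
    induction hx using Submodule.span_induction with
    | mem _ hy =>
      obtain ⟨D, hD, rfl⟩ := hy
      intro C hC g hg h hh
      simp only [coeff_simpleQuantity, P.mem_iff_eq_of_mem hC hD hg, P.mem_iff_eq_of_mem hC hD hh]
    | zero => simp
    | add y z _ _ hy hz =>
      intro C hC g hg h hh
      simp [MonoidAlgebra.coeff_add, hy C hC g hg h hh, hz C hC g hg h hh]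
    | smul c y _ hy =>
      intro C hC g hg h hh
      simp [MonoidAlgebra.coeff_smul, hy C hC g hg h hh]
  · intro hx
    rw [← MonoidAlgebra.sum_coeff_single x, Finsupp.sum,
      ← Finset.sum_fiberwise_of_maps_to (t := x.coeff.support.image P.classOf)
        (fun g hg => Finset.mem_image_of_mem _ hg)]
    refine Submodule.sum_mem _ fun C hC => ?_
    obtain ⟨g₀, hg₀, rfl⟩ := Finset.mem_image.1 hC
    have hfiber : {g ∈ x.coeff.support | P.classOf g = P.classOf g₀} = P.classOf g₀ := by
      ext g
      rw [Finset.mem_filter, Finsupp.mem_support_iff]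
      refine ⟨fun h => h.2 ▸ P.mem_classOf g, fun hg => ⟨?_, ?_⟩⟩
      · rw [hx _ (P.classOf_mem g₀) g hg g₀ (P.mem_classOf g₀)]
        exact Finsupp.mem_support_iff.1 hg₀
      · exact (P.mem_iff_eq_of_mem (P.classOf_mem g₀) (P.classOf_mem g) hg).1 (P.mem_classOf g)
    have hconst : ∑ g ∈ P.classOf g₀, MonoidAlgebra.single g (x.coeff g) =
        x.coeff g₀ • simpleQuantity F (P.classOf g₀) := by
      rw [simpleQuantity, Finset.smul_sum]
      refine Finset.sum_congr rfl fun g hg => ?_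
      rw [MonoidAlgebra.smul_single, smul_eq_mul, mul_one,
        hx _ (P.classOf_mem g₀) g hg g₀ (P.mem_classOf g₀)]
    rw [hfiber, hconst]
    exact Submodule.smul_mem _ _ (Submodule.subset_span ⟨_, P.classOf_mem g₀, rfl⟩)

end FinPartition

section Fresh

variable {F G : Type*} [Field F] [CommGroup G]

theorem fresh_eq_mapDomainAlgHom (m : ℤ) (x : MonoidAlgebra F G) :
    fresh m x = MonoidAlgebra.mapDomainAlgHom F F (zpowGroupHom m) x := by
  conv_rhs => rw [← MonoidAlgebra.sum_coeff_single x]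
  rw [MonoidAlgebra.mapDomainAlgHom_apply, MonoidAlgebra.mapDomain_sum]
  simp [fresh, Finsupp.sum]

theorem fresh_one (x : MonoidAlgebra F G) : fresh 1 x = x := by
  have : zpowGroupHom (1 : ℤ) = MonoidHom.id G := by ext; simp
  rw [fresh_eq_mapDomainAlgHom, this, MonoidAlgebra.mapDomainAlgHom_id, AlgHom.id_apply]

theorem fresh_fresh (a b : ℤ) (x : MonoidAlgebra F G) : fresh a (fresh b x) = fresh (b * a) x := by
  have : zpowGroupHom (b * a) = (zpowGroupHom a).comp (zpowGroupHom b : G →* G) := by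
    ext; simp [zpow_mul]
  rw [fresh_eq_mapDomainAlgHom, fresh_eq_mapDomainAlgHom, fresh_eq_mapDomainAlgHom, this,
    MonoidAlgebra.mapDomainAlgHom_comp, AlgHom.comp_apply]

theorem fresh_simpleQuantity [DecidableEq G] {m : ℤ} (hm : Function.Injective fun g : G => g ^ m)
    (C : Finset G) :
    fresh m (simpleQuantity F C) = simpleQuantity F (C.image fun g => g ^ m) := by
  rw [fresh_eq_mapDomainAlgHom, simpleQuantity, simpleQuantity, map_sum,
    Finset.sum_image fun g _ h _ hgh => hm hgh]
  simp

theorem fresh_zero_eq_smul_one (x : MonoidAlgebra F G) :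
    fresh 0 x = (∑ g ∈ x.coeff.support, x.coeff g) • 1 := by
  simp [fresh, Finset.sum_smul, MonoidAlgebra.one_def, MonoidAlgebra.smul_single]

end Fresh

namespace SchurRing

variable {F G : Type*} [Field F] [Group G] (S : SchurRing F G)

theorem mem_carrier_iff {x : MonoidAlgebra F G} :
    x ∈ S.carrier ↔ ∀ C ∈ S.classes, ∀ g ∈ C, ∀ h ∈ C, x.coeff g = x.coeff h :=
  S.mem_schurModule_iff

theorem simpleQuantity_mem_carrier {C : Finset G} (hC : C ∈ S.classes) :
    simpleQuantity F C ∈ S.carrier :=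
  Submodule.subset_span ⟨C, hC, rfl⟩

theorem one_mem_carrier : (1 : MonoidAlgebra F G) ∈ S.carrier := by
  simpa [simpleQuantity, MonoidAlgebra.one_def] using S.simpleQuantity_mem_carrier S.one_mem

theorem mul_mem_carrier {x y : MonoidAlgebra F G} (hx : x ∈ S.carrier) (hy : y ∈ S.carrier) :
    x * y ∈ S.carrier := by
  have hxy := Submodule.mul_mem_mul hx hy
  rw [carrier, schurModule, Submodule.span_mul_span] at hxy
  refine Submodule.span_le.2 ?_ hxy
  rintro _ ⟨_, ⟨C, hC, rfl⟩, _, ⟨D, hD, rfl⟩, rfl⟩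
  exact S.mul_mem C hC D hD

theorem pow_mem_carrier {x : MonoidAlgebra F G} (hx : x ∈ S.carrier) (n : ℕ) :
    x ^ n ∈ S.carrier := by
  induction n with
  | zero => rw [pow_zero]; exact S.one_mem_carrier
  | succ n ih => rw [pow_succ]; exact S.mul_mem_carrier ih hx

end SchurRing

namespace SchurRing

variable {F G : Type*} [Field F] [CommGroup G] (S : SchurRing F G)

theorem mapsTo_fresh_of_simpleQuantity {m : ℤ}
    (h : ∀ C ∈ S.classes, fresh m (simpleQuantity F C) ∈ S.carrier) :
    Set.MapsTo (fresh (F := F) (G := G) m) S.carrier S.carrier := by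
  have hle : S.carrier ≤
      S.carrier.comap (MonoidAlgebra.mapDomainAlgHom F F (zpowGroupHom m)).toLinearMap := by
    refine Submodule.span_le.2 ?_
    rintro _ ⟨C, hC, rfl⟩
    rw [SetLike.mem_coe, Submodule.mem_comap, AlgHom.toLinearMap_apply, ← fresh_eq_mapDomainAlgHom]
    exact h C hC
  intro x hx
  rw [fresh_eq_mapDomainAlgHom]
  exact hle hx

theorem mapsTo_fresh_zero : Set.MapsTo (fresh (F := F) (G := G) 0) S.carrier S.carrier :=
  fun x _ => fresh_zero_eq_smul_one x ▸ Submodule.smul_mem _ _ S.one_mem_carrier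

theorem mapsTo_fresh_neg_one : Set.MapsTo (fresh (F := F) (G := G) (-1)) S.carrier S.carrier := by
  classical
  refine S.mapsTo_fresh_of_simpleQuantity fun C hC => ?_
  obtain ⟨D, hD, hDC⟩ := S.inv_mem C hC
  have himage : C.image (fun g : G => g ^ (-1 : ℤ)) = D := by
    ext g
    simp [hDC, inv_eq_iff_eq_inv]
  rw [fresh_simpleQuantity (fun g h hgh => by simpa using hgh), himage]
  exact S.simpleQuantity_mem_carrier hD

theorem mapsTo_fresh_prime [CharZero F] [IsMulTorsionFree G] {p : ℕ} (hp : p.Prime) :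
    Set.MapsTo (fresh (F := F) (G := G) p) S.carrier S.carrier := by
  classical
  have := Fact.mk hp
  refine S.mapsTo_fresh_of_simpleQuantity fun C hC => ?_
  have himage : C.image (fun g : G => g ^ (p : ℤ)) = C.image (fun g => g ^ p) := by
    simp [zpow_natCast]
  rw [fresh_simpleQuantity (zpow_left_injective (by exact_mod_cast hp.ne_zero)), himage]
  refine S.mem_carrier_iff.2 fun D hD g hg h hh => ?_
  have hN : (simpleQuantity ℕ C ^ p).coeff g = (simpleQuantity ℕ C ^ p).coeff h := by
    apply Nat.cast_injective (R := F)
    rw [natCast_coeff_simpleQuantity_pow, natCast_coeff_simpleQuantity_pow]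
    exact S.mem_carrier_iff.1 (S.pow_mem_carrier (S.simpleQuantity_mem_carrier hC) p) D hD g hg h hh
  have hmod := congrArg (Nat.cast : ℕ → ZMod p) hN
  rw [natCast_coeff_simpleQuantity_pow, natCast_coeff_simpleQuantity_pow,
    simpleQuantity_pow_char p (pow_left_injective hp.ne_zero).injOn] at hmod
  simp only [coeff_simpleQuantity] at hmod ⊢
  split_ifs at hmod ⊢ <;> simp_all

theorem mapsTo_fresh_natCast [CharZero F] [IsMulTorsionFree G] (n : ℕ) :
    Set.MapsTo (fresh (F := F) (G := G) n) S.carrier S.carrier := by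
  induction n using Nat.recOnMul with
  | zero => exact S.mapsTo_fresh_zero
  | one => exact fun x hx => (fresh_one x).symm ▸ hx
  | prime p hp => exact S.mapsTo_fresh_prime hp
  | mul a b ha hb =>
    intro x hx
    rw [Nat.cast_mul, ← fresh_fresh]
    exact hb (ha hx)

end SchurRing

theorem stmt12 {F G : Type*} [Field F] [CharZero F] [CommGroup G]
    (hG : ∀ g : G, g ≠ 1 → ¬IsOfFinOrder g) (S : SchurRing F G)
    (α : MonoidAlgebra F G) (hα : α ∈ S.carrier) (m : ℤ) :
    fresh m α ∈ S.carrier := by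
  have := isMulTorsionFree_iff_not_isOfFinOrder.2 hG
  obtain ⟨n, rfl | rfl⟩ := Int.eq_nat_or_neg m
  · exact S.mapsTo_fresh_natCast n hα
  · rw [← neg_one_mul, ← fresh_fresh]
    exact S.mapsTo_fresh_natCast n (S.mapsTo_fresh_neg_one hα)
end

section
/- There exist two Schur modules S and T over the infinite cyclic group Z whose intersection S ∩ T = 0; in particular, the intersection of two Schur modules over an infinite group need not be a Schur module. Specifically, for S with partition {{z^{2k}, z^{2k+1}} | k ∈ ℤ} and T with partition {{z^{2k}, z^{2k-1}} | k ∈ ℤ}, one has S ∩ T = 0. -/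
/-! An element of a Schur module has constant coefficients on each class. The classes
`{2k, 2k + 1}` of `S` and `{2k - 1, 2k}` of `T` interleave, so they link every `n` to `n + 1`,
and an element of `S ⊓ T` has the same coefficient at every point of the infinite group `ℤ`.
Being finitely supported, it is zero. Every Schur module contains the nonzero simple quantities
of its classes, so the zero module is not one. -/

open Multiplicative

lemma simpleQuantity_coeff (F : Type*) {G : Type*} [Semiring F] [DecidableEq G] (C : Finset G)
    (g : G) : (simpleQuantity F C).coeff g = if g ∈ C then 1 else 0 := by
  simp [simpleQuantity, MonoidAlgebra.coeff_sum, MonoidAlgebra.coeff_single,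
    Finsupp.single_apply]

namespace FinPartition

variable {G : Type*} (P : FinPartition G)

lemma mem_iff_mem_of_mem {C D : Finset G} (hC : C ∈ P.classes) (hD : D ∈ P.classes)
    {g h : G} (hg : g ∈ C) (hh : h ∈ C) : g ∈ D ↔ h ∈ D := by
  have eq_of_mem {x : G} (hx : x ∈ C) (hxD : x ∈ D) : D = C :=
    (P.existsUnique_mem x).unique ⟨hD, hxD⟩ ⟨hC, hx⟩
  exact ⟨fun hgD => eq_of_mem hg hgD ▸ hh, fun hhD => eq_of_mem hh hhD ▸ hg⟩

end FinPartition

section SchurModule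

variable {F G : Type*} [Field F] (P : FinPartition G)

lemma coeff_eq_of_mem_schurModule {x : MonoidAlgebra F G} (hx : x ∈ schurModule F P)
    {C : Finset G} (hC : C ∈ P.classes) {g h : G} (hg : g ∈ C) (hh : h ∈ C) :
    x.coeff g = x.coeff h := by
  classical
  induction hx using Submodule.span_induction with
  | mem y hy =>
    obtain ⟨D, hD, rfl⟩ := hy
    simp only [simpleQuantity_coeff, P.mem_iff_mem_of_mem hC hD hg hh]
  | zero => rfl
  | add y y' _ _ hy hy' => simp only [MonoidAlgebra.coeff_add, Finsupp.add_apply, hy, hy']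
  | smul c y _ hy => simp only [MonoidAlgebra.coeff_smul, Finsupp.smul_apply, hy]

lemma schurModule_ne_bot [Nonempty G] : schurModule F P ≠ ⊥ := by
  classical
  obtain ⟨g⟩ := ‹Nonempty G›
  obtain ⟨C, ⟨hC, hgC⟩, -⟩ := P.existsUnique_mem g
  intro hbot
  have hmem : simpleQuantity F C ∈ schurModule F P := Submodule.subset_span ⟨C, hC, rfl⟩
  rw [hbot, Submodule.mem_bot] at hmem
  simpa [hmem, hgC] using simpleQuantity_coeff F C g

end SchurModule

lemma MonoidAlgebra.eq_zero_of_coeff_eq {F G : Type*} [Semiring F] [Infinite G]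
    {x : MonoidAlgebra F G} (hx : ∀ g h, x.coeff g = x.coeff h) : x = 0 := by
  obtain ⟨g₀, hg₀⟩ := Infinite.exists_notMem_finset x.coeff.support
  ext g
  rw [hx g g₀, Finsupp.notMem_support_iff.mp hg₀]
  rfl

def pairPartition (c : ℤ) : FinPartition (Multiplicative ℤ) where
  classes := Set.range fun k : ℤ => {ofAdd (2 * k + c), ofAdd (2 * k + c + 1)}
  nonempty := by
    rintro C ⟨k, rfl⟩
    exact Finset.insert_nonempty _ _
  existsUnique_mem g := by
    obtain ⟨n, rfl⟩ := ofAdd.surjective g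
    refine ⟨{ofAdd (2 * ((n - c) / 2) + c), ofAdd (2 * ((n - c) / 2) + c + 1)},
      ⟨⟨_, rfl⟩, ?_⟩, ?_⟩
    · simp only [Finset.mem_insert, Finset.mem_singleton, EmbeddingLike.apply_eq_iff_eq]
      omega
    · rintro _ ⟨⟨k, rfl⟩, hg⟩
      simp only [Finset.mem_insert, Finset.mem_singleton, EmbeddingLike.apply_eq_iff_eq] at hg
      obtain rfl : k = (n - c) / 2 := by omega
      rfl

lemma schurModule_pairPartition (F : Type*) [Field F] (c : ℤ) :
    schurModule F (pairPartition c) = Submodule.span F (Set.range fun k : ℤ =>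
      MonoidAlgebra.single (ofAdd (2 * k + c)) 1 +
        MonoidAlgebra.single (ofAdd (2 * k + c + 1)) 1) := by
  rw [schurModule, pairPartition, ← Set.range_comp]
  congr! with k
  rw [Function.comp_apply, simpleQuantity, Finset.sum_pair (by simp)]

lemma coeff_eq_of_mem_schurModule_pairPartition {F : Type*} [Field F] {c : ℤ}
    {x : MonoidAlgebra F (Multiplicative ℤ)} (hx : x ∈ schurModule F (pairPartition c))
    (k : ℤ) :
    x.coeff (ofAdd (2 * k + c)) = x.coeff (ofAdd (2 * k + c + 1)) :=
  coeff_eq_of_mem_schurModule _ hx ⟨k, rfl⟩ (by simp) (by simp)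

lemma schurModule_pairPartition_inf_succ (F : Type*) [Field F] (c : ℤ) :
    schurModule F (pairPartition c) ⊓ schurModule F (pairPartition (c + 1)) = ⊥ := by
  refine (Submodule.eq_bot_iff _).mpr fun x ⟨hx, hx'⟩ => ?_
  have periodic : Function.Periodic (fun n : ℤ => x.coeff (ofAdd n)) 1 := by
    intro n
    obtain ⟨k, hk | hk⟩ := Int.even_or_odd' (n - c)
    · obtain rfl : n = 2 * k + c := by omega
      exact (coeff_eq_of_mem_schurModule_pairPartition hx k).symm
    · obtain rfl : n = 2 * k + (c + 1) := by omega
      exact (coeff_eq_of_mem_schurModule_pairPartition hx' k).symm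
  refine MonoidAlgebra.eq_zero_of_coeff_eq fun g h => ?_
  rw [← ofAdd_toAdd g, ← ofAdd_toAdd h, ← mul_one (toAdd g), ← mul_one (toAdd h)]
  exact (periodic.int_mul_eq _).trans (periodic.int_mul_eq _).symm

theorem stmt19_general {F : Type*} [Field F]
    (z : Multiplicative ℤ) (hz : z = Multiplicative.ofAdd 1)
    (S T : Submodule F (MonoidAlgebra F (Multiplicative ℤ)))
    (hS : S = Submodule.span F (Set.range fun k : ℤ =>
      (MonoidAlgebra.single (z ^ (2 * k)) 1 + MonoidAlgebra.single (z ^ (2 * k + 1)) 1 :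
        MonoidAlgebra F (Multiplicative ℤ))))
    (hT : T = Submodule.span F (Set.range fun k : ℤ =>
      (MonoidAlgebra.single (z ^ (2 * k)) 1 + MonoidAlgebra.single (z ^ (2 * k - 1)) 1 :
        MonoidAlgebra F (Multiplicative ℤ)))) :
    -- `S` and `T` are Schur modules
    (∃ P : FinPartition (Multiplicative ℤ), S = schurModule F P) ∧
    (∃ Q : FinPartition (Multiplicative ℤ), T = schurModule F Q) ∧
    -- whose intersection is zero, hence not a Schur module
    S ⊓ T = ⊥ ∧
    ¬ ∃ R : FinPartition (Multiplicative ℤ), S ⊓ T = schurModule F R := by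
  have hzpow (n : ℤ) : z ^ n = ofAdd n := by rw [hz, ← ofAdd_zsmul, smul_eq_mul, mul_one]
  have hSP : S = schurModule F (pairPartition 0) := by
    simp only [hS, hzpow, schurModule_pairPartition, add_zero]
  have hTQ : T = schurModule F (pairPartition (-1)) := by
    rw [hT, schurModule_pairPartition]
    congr! 2
    funext k
    rw [hzpow, hzpow, add_comm]
    congr 3
    ring
  have hbot : S ⊓ T = ⊥ := by
    rw [hSP, hTQ, inf_comm, ← schurModule_pairPartition_inf_succ F (-1), neg_add_cancel]
  exact ⟨⟨_, hSP⟩, ⟨_, hTQ⟩, hbot,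
    fun ⟨R, hR⟩ => schurModule_ne_bot R (hR ▸ hbot)⟩

theorem stmt19 {F : Type*} [Field F] [CharZero F]
    (z : Multiplicative ℤ) (hz : z = Multiplicative.ofAdd 1)
    (S T : Submodule F (MonoidAlgebra F (Multiplicative ℤ)))
    (hS : S = Submodule.span F (Set.range fun k : ℤ =>
      (MonoidAlgebra.single (z ^ (2 * k)) 1 + MonoidAlgebra.single (z ^ (2 * k + 1)) 1 :
        MonoidAlgebra F (Multiplicative ℤ))))
    (hT : T = Submodule.span F (Set.range fun k : ℤ =>
      (MonoidAlgebra.single (z ^ (2 * k)) 1 + MonoidAlgebra.single (z ^ (2 * k - 1)) 1 :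
        MonoidAlgebra F (Multiplicative ℤ)))) :
    -- `S` and `T` are Schur modules
    (∃ P : FinPartition (Multiplicative ℤ), S = schurModule F P) ∧
    (∃ Q : FinPartition (Multiplicative ℤ), T = schurModule F Q) ∧
    -- whose intersection is zero, hence not a Schur module
    S ⊓ T = ⊥ ∧
    ¬ ∃ R : FinPartition (Multiplicative ℤ), S ⊓ T = schurModule F R :=
  stmt19_general z hz S T hS hT
end
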